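/- arXiv:2308.12614 — 2 statements merged into one kernel-verified Lean document; each statement's English description precedes it below -/
import Mathlib

section
/- If G is a signed-interval graph whose representation uses intervals with pairwise distinct left endpoints, then ordering the vertices by increasing left endpoint gives an ordering of the adjacency matrix in which every 0 entry has either only 0s to its right or only 0s below it. -/
/-- Signed-interval adjacency (loops allowed: `SIGAdj l r v v` iff `v` positive). -/
def SIGAdj {V : Type*} (l r : V → ℝ) (u v : V) : Prop :=
  (l u ≤ r u ∧ l v ≤ r v ∧ l u ≤ r v ∧ l v ≤ r u) ∨
  (r u < l u ∧ l v ≤ r v ∧ l v ≤ r u ∧ l u ≤ r v) ∨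
  (r v < l v ∧ l u ≤ r u ∧ l u ≤ r v ∧ l v ≤ r u)

/-! Signed-interval adjacency is just `l u ≤ r v ∧ l v ≤ r u`: two negative intervals never
satisfy both inequalities, since `l v ≤ r u < l u ≤ r v < l v`. So a non-edge `uv` has
`r u < l v` or `r v < l u`, and that inequality persists when the left endpoint of `v`
(resp. `u`) is increased. -/

theorem sigAdj_iff {V : Type*} (l r : V → ℝ) (u v : V) :
    SIGAdj l r u v ↔ l u ≤ r v ∧ l v ≤ r u := by
  constructor
  · rintro (⟨-, -, huv, hvu⟩ | ⟨-, -, hvu, huv⟩ | ⟨-, -, huv, hvu⟩) <;> exact ⟨huv, hvu⟩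
  · rintro ⟨huv, hvu⟩
    rcases le_or_gt (l u) (r u) with hu | hu <;> rcases le_or_gt (l v) (r v) with hv | hv
    · exact Or.inl ⟨hu, hv, huv, hvu⟩
    · exact Or.inr (Or.inr ⟨hv, hu, huv, hvu⟩)
    · exact Or.inr (Or.inl ⟨hu, hv, hvu, huv⟩)
    · linarith

theorem signed_interval_left_endpoint_order_stair_free_general {V : Type*}
    (l r : V → ℝ)
    (A : V → V → Prop) (hA : ∀ u v, A u v ↔ SIGAdj l r u v) :
    ∀ u v, ¬ A u v →
      (∀ v', l v < l v' → ¬ A u v') ∨ (∀ u', l u < l u' → ¬ A u' v) := by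
  intro u v huv
  simp only [hA, sigAdj_iff, not_and_or, not_le] at huv ⊢
  rcases huv with hvu | huv
  · right
    intro u' hu'
    exact Or.inl (hvu.trans hu')
  · left
    intro v' hv'
    exact Or.inr (huv.trans hv')

/-- If `G` is a signed-interval graph whose representation has pairwise distinct
left endpoints, then ordering the vertices by increasing left endpoint, every 0
entry of the adjacency matrix has either only 0s to its right (larger left endpoint
column) or only 0s below it (larger left endpoint row). -/
theorem signed_interval_left_endpoint_order_stair_free {V : Type*}
    (l r : V → ℝ) (hl : Function.Injective l)
    (A : V → V → Prop) (hA : ∀ u v, A u v ↔ SIGAdj l r u v) :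
    ∀ u v, ¬ A u v →
      (∀ v', l v < l v' → ¬ A u v') ∨ (∀ u', l u < l u' → ¬ A u' v) :=
  signed_interval_left_endpoint_order_stair_free_general l r A hA
end

section
/- The graph T_0 — consisting of a path v', v, x_0, x_1, w, w', a vertex x adjacent to x_0 and x_1, a vertex u adjacent to x, and a vertex u' adjacent to u — is not a co-TT graph. -/
/-- `G` is a co-TT (signed-interval) graph. -/
def IsCoTT {V : Type*} (G : SimpleGraph V) : Prop :=
  ∃ l r : V → ℝ, ∀ u v : V, u ≠ v → (G.Adj u v ↔ l u ≤ r v ∧ l v ≤ r u)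

/-- The graph `T₀` on vertices `v' = 0, v = 1, x₀ = 2, x = 3, x₁ = 4, w = 5,
w' = 6, u = 7, u' = 8`, with edges `v'v, vx₀, x₀x₁, x₁w, ww', x₀x, xx₁, xu, uu'`. -/
def T0graph : SimpleGraph (Fin 9) := SimpleGraph.fromRel (fun a b =>
  (a = 0 ∧ b = 1) ∨ (a = 1 ∧ b = 2) ∨ (a = 2 ∧ b = 4) ∨ (a = 4 ∧ b = 5) ∨
  (a = 5 ∧ b = 6) ∨ (a = 2 ∧ b = 3) ∨ (a = 3 ∧ b = 4) ∨ (a = 3 ∧ b = 7) ∨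
  (a = 7 ∧ b = 8))

/-!
In a co-TT representation `(l, r)`, a vertex `v` with `r v < l v` has every neighbour `a` satisfying
`l a ≤ r v < l v ≤ r a`, so any two of its neighbours are adjacent. Hence each of `v, x₀, x, x₁, w, u`,
having two non-adjacent neighbours, is represented by a genuine interval `[l, r]`, and among these
vertices adjacency is intersection of intervals. They induce a net: the triangle `x₀ x x₁` with
pendants `v, u, w`. The net is not an interval graph: the triangle's intervals share a point `m`,
each pendant misses `m`, so two pendants `p, q` (attached to `a, b`) lie on the same side of `m`,
say the left (the right side is the mirror image under `(l, r) ↦ (-r, -l)`); then `r p < l b ≤ r q` and `r q < l a ≤ r p`.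
-/

open Set

variable {V : Type*}

def IsCoTTRep (G : SimpleGraph V) (l r : V → ℝ) : Prop :=
  ∀ u v : V, u ≠ v → (G.Adj u v ↔ l u ≤ r v ∧ l v ≤ r u)

namespace IsCoTTRep

variable {G : SimpleGraph V} {l r : V → ℝ}

theorem neg (h : IsCoTTRep G l r) : IsCoTTRep G (-r) (-l) := fun u v huv => by
  simp only [h u v huv, Pi.neg_apply, neg_le_neg_iff]
  exact and_comm

theorem left_le_right (h : IsCoTTRep G l r) {u v : V} (huv : G.Adj u v) : l u ≤ r v :=
  ((h u v huv.ne).mp huv).1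

theorem right_lt_left_of_not_adj (h : IsCoTTRep G l r) {u v : V} (huv : u ≠ v)
    (hn : ¬ G.Adj u v) (hle : l u ≤ r v) : r u < l v :=
  not_le.mp fun hvu => hn ((h u v huv).mpr ⟨hle, hvu⟩)

theorem le_of_adj_of_adj_of_not_adj (h : IsCoTTRep G l r) {v a b : V} (ha : G.Adj v a)
    (hb : G.Adj v b) (hab : a ≠ b) (hn : ¬ G.Adj a b) : l v ≤ r v := by
  by_contra! hv
  have hav := h.left_le_right ha.symm
  have hva := h.left_le_right ha
  have hbv := h.left_le_right hb.symm
  have hvb := h.left_le_right hb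
  exact (h.right_lt_left_of_not_adj hab hn (by linarith)).not_ge (by linarith)

theorem adj_of_mem_Icc (h : IsCoTTRep G l r) {u v : V} {m : ℝ} (huv : u ≠ v)
    (hu : m ∈ Icc (l u) (r u)) (hv : m ∈ Icc (l v) (r v)) : G.Adj u v :=
  (h u v huv).mpr ⟨hu.1.trans hv.2, hv.1.trans hu.2⟩

theorem right_lt_or_lt_left_of_not_adj (h : IsCoTTRep G l r) {p b : V} {m : ℝ} (hpb : p ≠ b)
    (hn : ¬ G.Adj p b) (hb : m ∈ Icc (l b) (r b)) : r p < m ∨ m < l p := by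
  by_contra! hp
  exact hn (h.adj_of_mem_Icc hpb ⟨hp.2, hp.1⟩ hb)

theorem exists_mem_Icc_of_adj (h : IsCoTTRep G l r) {a b c : V} (hab : G.Adj a b)
    (hbc : G.Adj b c) (hca : G.Adj c a) (ha : l a ≤ r a) (hb : l b ≤ r b) (hc : l c ≤ r c) :
    ∃ m, m ∈ Icc (l a) (r a) ∧ m ∈ Icc (l b) (r b) ∧ m ∈ Icc (l c) (r c) := by
  have hla : l a ≤ max (l a) (max (l b) (l c)) := le_max_left _ _
  have hlb : l b ≤ max (l a) (max (l b) (l c)) := le_max_of_le_right (le_max_left _ _)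
  have hlc : l c ≤ max (l a) (max (l b) (l c)) := le_max_of_le_right (le_max_right _ _)
  exact ⟨_, ⟨hla, max_le ha (max_le (h.left_le_right hab.symm) (h.left_le_right hca))⟩,
    ⟨hlb, max_le (h.left_le_right hab) (max_le hb (h.left_le_right hbc.symm))⟩,
    ⟨hlc, max_le (h.left_le_right hca.symm) (max_le (h.left_le_right hbc) hc)⟩⟩

theorem false_of_right_lt_of_right_lt (h : IsCoTTRep G l r) {a b p q : V} {m : ℝ}
    (hpa : G.Adj p a) (hqb : G.Adj q b) (hpb : p ≠ b) (hqa : q ≠ a)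
    (hpb' : ¬ G.Adj p b) (hqa' : ¬ G.Adj q a) (hp : l p ≤ r p) (hq : l q ≤ r q)
    (ha : m ≤ r a) (hb : m ≤ r b) (hpm : r p < m) (hqm : r q < m) : False := by
  have hpb'' := h.right_lt_left_of_not_adj hpb hpb' (by linarith)
  have hqa'' := h.right_lt_left_of_not_adj hqa hqa' (by linarith)
  linarith [h.left_le_right hpa.symm, h.left_le_right hqb.symm]

theorem false_of_same_side (h : IsCoTTRep G l r) {a b p q : V} {m : ℝ}
    (hpa : G.Adj p a) (hqb : G.Adj q b) (hpb : p ≠ b) (hqa : q ≠ a)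
    (hpb' : ¬ G.Adj p b) (hqa' : ¬ G.Adj q a) (hp : l p ≤ r p) (hq : l q ≤ r q)
    (ha : m ∈ Icc (l a) (r a)) (hb : m ∈ Icc (l b) (r b))
    (hside : r p < m ∧ r q < m ∨ m < l p ∧ m < l q) : False := by
  rcases hside with ⟨hpm, hqm⟩ | ⟨hpm, hqm⟩
  · exact h.false_of_right_lt_of_right_lt hpa hqb hpb hqa hpb' hqa' hp hq ha.2 hb.2 hpm hqm
  · exact h.neg.false_of_right_lt_of_right_lt (m := -m) hpa hqb hpb hqa hpb' hqa'
      (neg_le_neg hp) (neg_le_neg hq) (neg_le_neg ha.1) (neg_le_neg hb.1)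
      (neg_lt_neg hpm) (neg_lt_neg hqm)

theorem false_of_net (h : IsCoTTRep G l r) {a b c p q s : V}
    (hab : G.Adj a b) (hbc : G.Adj b c) (hca : G.Adj c a)
    (hpa : G.Adj p a) (hqb : G.Adj q b) (hsc : G.Adj s c)
    (hpb : ¬ G.Adj p b) (hpc : ¬ G.Adj p c) (hqa : ¬ G.Adj q a) (hqc : ¬ G.Adj q c)
    (hsa : ¬ G.Adj s a) (hsb : ¬ G.Adj s b)
    (ha : l a ≤ r a) (hb : l b ≤ r b) (hc : l c ≤ r c)
    (hp : l p ≤ r p) (hq : l q ≤ r q) (hs : l s ≤ r s) : False := by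
  obtain ⟨m, hma, hmb, hmc⟩ := h.exists_mem_Icc_of_adj hab hbc hca ha hb hc
  have hpb₀ : p ≠ b := (G.ne_of_adj_of_not_adj hbc hpc).symm
  have hpc₀ : p ≠ c := (G.ne_of_adj_of_not_adj hbc.symm hpb).symm
  have hqa₀ : q ≠ a := (G.ne_of_adj_of_not_adj hca.symm hqc).symm
  have hqc₀ : q ≠ c := (G.ne_of_adj_of_not_adj hca hqa).symm
  have hsa₀ : s ≠ a := (G.ne_of_adj_of_not_adj hab hsb).symm
  have hsb₀ : s ≠ b := (G.ne_of_adj_of_not_adj hab.symm hsa).symm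
  have hpq := h.false_of_same_side hpa hqb hpb₀ hqa₀ hpb hqa hp hq hma hmb
  have hps := h.false_of_same_side hpa hsc hpc₀ hsa₀ hpc hsa hp hs hma hmc
  have hqs := h.false_of_same_side hqb hsc hqc₀ hsb₀ hqc hsb hq hs hmb hmc
  rcases h.right_lt_or_lt_left_of_not_adj hpb₀ hpb hmb with sp | sp <;>
    rcases h.right_lt_or_lt_left_of_not_adj hqa₀ hqa hma with sq | sq <;>
    rcases h.right_lt_or_lt_left_of_not_adj hsa₀ hsa hma with ss | ss
  all_goals first
    | exact hpq (.inl ⟨sp, sq⟩) | exact hpq (.inr ⟨sp, sq⟩)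
    | exact hps (.inl ⟨sp, ss⟩) | exact hps (.inr ⟨sp, ss⟩)
    | exact hqs (.inl ⟨sq, ss⟩) | exact hqs (.inr ⟨sq, ss⟩)

end IsCoTTRep

theorem T0graph_not_isCoTT : ¬ IsCoTT T0graph := by
  rintro ⟨l, r, h : IsCoTTRep T0graph l r⟩
  refine h.false_of_net (a := 2) (b := 3) (c := 4) (p := 1) (q := 7) (s := 5)
    ?_ ?_ ?_ ?_ ?_ ?_ ?_ ?_ ?_ ?_ ?_ ?_
    (h.le_of_adj_of_adj_of_not_adj (a := 1) (b := 3) ?_ ?_ ?_ ?_)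
    (h.le_of_adj_of_adj_of_not_adj (a := 2) (b := 7) ?_ ?_ ?_ ?_)
    (h.le_of_adj_of_adj_of_not_adj (a := 3) (b := 5) ?_ ?_ ?_ ?_)
    (h.le_of_adj_of_adj_of_not_adj (a := 0) (b := 2) ?_ ?_ ?_ ?_)
    (h.le_of_adj_of_adj_of_not_adj (a := 3) (b := 8) ?_ ?_ ?_ ?_)
    (h.le_of_adj_of_adj_of_not_adj (a := 4) (b := 6) ?_ ?_ ?_ ?_)
  all_goals simp [T0graph]
end
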